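/- Let a > 0 and β > 0. There exist constants C, M > 0 such that for all y ≤ 0 and all t > 0: | ∂_t[ errfn( (y+at)/√(4βt) ) − errfn( (y−at)/√(4βt) ) ] | ≤ C t^{−1/2} e^{−(y+at)²/(Mt)}. -/

import Mathlib

open MeasureTheory Set

noncomputable def errfn (z : ℝ) : ℝ :=
  (1 / (2 * Real.pi)) * ∫ ξ in Set.Iic z, Real.exp (-ξ^2)

/-! With s = √(4βt), p = (y + at)/s and q = (at − y)/s, the chain rule gives the time derivative
as (q e^{-p²} + p e^{-q²}) / (4πt). For y ≤ 0 we have |p| ≤ q, and the bracket equals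
(p + q) e^{-p²} − p (e^{-p²} − e^{-q²}). The correction term is at most 3 (p + q) e^{-p²/2}:
either |p| ≤ p + q, or |p| > p + q, and then e^{-p²} − e^{-q²} ≤ (q² − p²) e^{-p²} with
q − p ≤ 3|p| and p² e^{-p²} ≤ e^{-p²/2}. Since p + q = 2at/s is of order √t and
p² = (y + at)²/(4βt), this is the claimed bound with M = 8β. -/

open Real

theorem hasDerivAt_integral_Iic {E : Type*} [NormedAddCommGroup E] [NormedSpace ℝ E]
    [CompleteSpace E] {f : ℝ → E} (hf : Continuous f) (hfi : Integrable f) (z : ℝ) :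
    HasDerivAt (fun w => ∫ ξ in Iic w, f ξ) (f z) z := by
  have hsplit : (fun w => ∫ ξ in Iic w, f ξ) =
      fun w => (∫ ξ in Iic 0, f ξ) + ∫ ξ in (0 : ℝ)..w, f ξ := by
    funext w
    rw [← intervalIntegral.integral_Iic_sub_Iic hfi.integrableOn hfi.integrableOn,
      add_sub_cancel]
  rw [hsplit]
  exact (hf.integral_hasStrictDerivAt 0 z).hasDerivAt.const_add _

theorem hasDerivAt_errfn (z : ℝ) : HasDerivAt errfn (1 / (2 * π) * exp (-z ^ 2)) z := by
  have hint : Integrable fun ξ : ℝ => exp (-ξ ^ 2) := by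
    simpa using integrable_exp_neg_mul_sq one_pos
  exact (hasDerivAt_integral_Iic (by fun_prop) hint z).const_mul _

theorem hasDerivAt_add_mul_div_sqrt_mul (y c : ℝ) {k t : ℝ} (hk : 0 < k) (ht : 0 < t) :
    HasDerivAt (fun τ => (y + c * τ) / √(k * τ)) ((c * t - y) / √(k * t) / (2 * t)) t := by
  have hkt : 0 < k * t := by positivity
  have hsqrt : HasDerivAt (fun τ => √(k * τ)) (k / (2 * √(k * t))) t :=
    (((hasDerivAt_id' t).const_mul k).sqrt (by simpa using hkt.ne')).congr_deriv (by simp)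
  refine (((hasDerivAt_id' t).const_mul c).const_add y |>.div hsqrt
    (sqrt_pos.2 hkt).ne').congr_deriv ?_
  have hsq : √(k * t) ^ 2 = k * t := sq_sqrt hkt.le
  field_simp
  linear_combination (c * t + y) * hsq

theorem hasDerivAt_errfn_pair (y a : ℝ) {k t : ℝ} (hk : 0 < k) (ht : 0 < t) :
    HasDerivAt (fun τ => errfn ((y + a * τ) / √(k * τ)) - errfn ((y - a * τ) / √(k * τ)))
      (((a * t - y) / √(k * t) * exp (-((y + a * t) / √(k * t)) ^ 2) +
        (y + a * t) / √(k * t) * exp (-((a * t - y) / √(k * t)) ^ 2)) / (4 * π * t)) t := by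
  have hplus := (hasDerivAt_errfn _).comp t (hasDerivAt_add_mul_div_sqrt_mul y a hk ht)
  have hminus := (hasDerivAt_errfn _).comp t (hasDerivAt_add_mul_div_sqrt_mul y (-a) hk ht)
  simp only [neg_mul, ← sub_eq_add_neg] at hminus
  refine (hplus.sub hminus).congr_deriv ?_
  have hsq : ((y - a * t) / √(k * t)) ^ 2 = ((a * t - y) / √(k * t)) ^ 2 := by ring
  rw [hsq]
  field_simp
  ring

theorem sq_mul_exp_neg_sq_le (p : ℝ) : p ^ 2 * exp (-p ^ 2) ≤ exp (-p ^ 2 / 2) := by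
  have hdecay : p ^ 2 / 2 * exp (-(p ^ 2 / 2)) ≤ 1 / 2 := by
    have h2e : 2 ≤ exp 1 := by linarith [add_one_le_exp 1]
    calc p ^ 2 / 2 * exp (-(p ^ 2 / 2)) ≤ exp (-1) := mul_exp_neg_le_exp_neg_one _
      _ = (exp 1)⁻¹ := exp_neg 1
      _ ≤ 1 / 2 := by rw [inv_eq_one_div]; gcongr
  have hsplit : exp (-p ^ 2) = exp (-(p ^ 2 / 2)) * exp (-p ^ 2 / 2) := by
    rw [← exp_add]; ring_nf
  calc p ^ 2 * exp (-p ^ 2) = 2 * (p ^ 2 / 2 * exp (-(p ^ 2 / 2))) * exp (-p ^ 2 / 2) := by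
        rw [hsplit]; ring
    _ ≤ 2 * (1 / 2) * exp (-p ^ 2 / 2) := by gcongr
    _ = exp (-p ^ 2 / 2) := by ring

theorem exp_neg_sub_exp_neg_le (u v : ℝ) : exp (-u) - exp (-v) ≤ exp (-u) * (v - u) := by
  have h := one_sub_le_exp_neg (v - u)
  have hsplit : exp (-v) = exp (-u) * exp (-(v - u)) := by rw [← exp_add]; ring_nf
  nlinarith [exp_pos (-u)]

theorem abs_mul_exp_neg_sq_add_mul_exp_neg_sq_le {p q : ℝ} (hpq : p ≤ q) (hsum : 0 < p + q) :
    |q * exp (-p ^ 2) + p * exp (-q ^ 2)| ≤ 4 * (p + q) * exp (-p ^ 2 / 2) := by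
  have hdecay : exp (-p ^ 2) ≤ exp (-p ^ 2 / 2) := exp_le_exp.2 (by nlinarith [sq_nonneg p])
  have hgap : 0 ≤ exp (-p ^ 2) - exp (-q ^ 2) := sub_nonneg.2 (exp_le_exp.2 (by nlinarith))
  have hcorr : |p| * (exp (-p ^ 2) - exp (-q ^ 2)) ≤ 3 * (p + q) * exp (-p ^ 2 / 2) := by
    rcases le_or_gt |p| (p + q) with hp | hp
    · calc |p| * (exp (-p ^ 2) - exp (-q ^ 2)) ≤ (p + q) * exp (-p ^ 2) :=
            mul_le_mul hp (by linarith [exp_pos (-q ^ 2)]) hgap hsum.le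
        _ ≤ 3 * (p + q) * exp (-p ^ 2 / 2) := by nlinarith [exp_pos (-p ^ 2)]
    · have hq : |p| * (q - p) ≤ 3 * p ^ 2 := by
        rcases abs_cases p with ⟨h, _⟩ | ⟨h, _⟩ <;> rw [h] at hp ⊢ <;> nlinarith
      calc |p| * (exp (-p ^ 2) - exp (-q ^ 2))
          ≤ |p| * (exp (-p ^ 2) * (q ^ 2 - p ^ 2)) := by
            gcongr; exact exp_neg_sub_exp_neg_le _ _
        _ = (p + q) * (|p| * (q - p)) * exp (-p ^ 2) := by ring
        _ ≤ (p + q) * (3 * p ^ 2) * exp (-p ^ 2) := by gcongr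
        _ = 3 * (p + q) * (p ^ 2 * exp (-p ^ 2)) := by ring
        _ ≤ 3 * (p + q) * exp (-p ^ 2 / 2) := by gcongr; exact sq_mul_exp_neg_sq_le p
  calc |q * exp (-p ^ 2) + p * exp (-q ^ 2)|
      = |(p + q) * exp (-p ^ 2) - p * (exp (-p ^ 2) - exp (-q ^ 2))| := by ring_nf
    _ ≤ |(p + q) * exp (-p ^ 2)| + |p * (exp (-p ^ 2) - exp (-q ^ 2))| := abs_sub _ _
    _ = (p + q) * exp (-p ^ 2) + |p| * (exp (-p ^ 2) - exp (-q ^ 2)) := by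
        rw [abs_mul, abs_mul, abs_of_pos hsum, abs_of_pos (exp_pos _), abs_of_nonneg hgap]
    _ ≤ 4 * (p + q) * exp (-p ^ 2 / 2) := by nlinarith

theorem errfn_pair_time_derivative (a β : ℝ) (ha : 0 < a) (hβ : 0 < β) :
    ∃ C > 0, ∃ M > 0, ∀ y : ℝ, y ≤ 0 → ∀ t : ℝ, 0 < t →
      |deriv (fun τ : ℝ =>
          errfn ((y + a*τ) / Real.sqrt (4*β*τ)) -
          errfn ((y - a*τ) / Real.sqrt (4*β*τ))) t| ≤
        C * t ^ (-(1/2:ℝ)) * Real.exp (-(y + a*t)^2 / (M*t)) := by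
  refine ⟨a / (π * √β), by positivity, 8 * β, by positivity, fun y hy t ht => ?_⟩
  rw [(hasDerivAt_errfn_pair y a (by positivity : (0 : ℝ) < 4 * β) ht).deriv, abs_div,
    abs_of_pos (by positivity : 0 < 4 * π * t)]
  set s := √(4 * β * t) with hs_def
  have hs : s = 2 * √β * √t := by
    rw [hs_def, sqrt_mul (by positivity), sqrt_mul (by norm_num),
      show (4 : ℝ) = 2 ^ 2 by norm_num, sqrt_sq (by norm_num)]
  have hsq : ((y + a * t) / s) ^ 2 / 2 = (y + a * t) ^ 2 / (8 * β * t) := by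
    rw [div_pow, hs_def, sq_sqrt (by positivity)]; ring
  have hpq : (y + a * t) / s ≤ (a * t - y) / s := by
    gcongr; linarith
  have hsum : 0 < (y + a * t) / s + (a * t - y) / s := by
    rw [← add_div, hs]; ring_nf; positivity
  have hβ' : 0 < √β := sqrt_pos.2 hβ
  have ht' : 0 < √t := sqrt_pos.2 ht
  calc _ ≤ 4 * ((y + a * t) / s + (a * t - y) / s) * exp (-((y + a * t) / s) ^ 2 / 2) /
          (4 * π * t) := by
        gcongr
        exact abs_mul_exp_neg_sq_add_mul_exp_neg_sq_le hpq hsum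
    _ = _ := by
        rw [neg_div, hsq, ← neg_div, rpow_neg ht.le, ← sqrt_eq_rpow, hs]
        field_simp
        ring
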